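/- For any HDA X and Y, every pointed precubical morphism f : X̃ → Y from the unfolding of X to Y factors uniquely through the projection of Y: there exists a unique pointed precubical morphism g : X̃ → Ỹ with f = π_Y∘g. Consequently, there is a coreflection U_1 : HDAh ⇄ HDA : U_2 with U_1 left adjoint given by U_1(X) = X̃ on objects and U_1(f) = f on morphisms, U_2 right adjoint given by U_2(X) = X on objects and U_2(f) = f̃ on morphisms, and counit the projections π_X : X̃ → X. -/

import Mathlib

set_option autoImplicit false

/-- A precubical set: a graded set with face maps `δ_k^ν` (ν encoded as `Bool`,
`false` = lower face `δ^0`, `true` = upper face `δ^1`; indices are 0-based)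
satisfying the precubical identity. -/
structure PCSet : Type 1 where
  cube : ℕ → Type
  face : ∀ {n : ℕ}, Bool → Fin (n + 1) → cube (n + 1) → cube n
  precub : ∀ {n : ℕ} (ν μ : Bool) (k l : ℕ) (hk : k < n + 1) (hl : l < n + 2)
      (_ : k < l) (x : cube (n + 2)),
      face ν ⟨k, hk⟩ (face μ ⟨l, hl⟩ x) =
        face μ ⟨l - 1, by omega⟩ (face ν ⟨k, by omega⟩ x)

namespace PCSet

/-- A cube of arbitrary dimension. -/
abbrev Cell (X : PCSet) : Type := Σ n : ℕ, X.cube n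

/-- One step of a cube path: either `x = δ_k^0 y` or `y = δ_k^1 x`. -/
def Step (X : PCSet) (x y : X.Cell) : Prop :=
  (∃ (n : ℕ) (k : Fin (n + 1)) (c : X.cube (n + 1)),
      x = ⟨n, X.face false k c⟩ ∧ y = ⟨n + 1, c⟩) ∨
  (∃ (n : ℕ) (k : Fin (n + 1)) (c : X.cube (n + 1)),
      x = ⟨n + 1, c⟩ ∧ y = ⟨n, X.face true k c⟩)

/-- A cube path: a nonempty sequence of cubes, consecutive ones related by `Step`. -/
def IsCubePath (X : PCSet) (l : List X.Cell) : Prop :=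
  l ≠ [] ∧ l.Chain' X.Step

/-- Adjacency condition (1): `x_{p−1} = δ_k^0 x_p`, `x_p = δ_ℓ^0 x_{p+1}`,
`y_{p−1} = δ_{ℓ−1}^0 y_p`, `y_p = δ_k^0 y_{p+1}`, `k < ℓ`.
Here `a = x_{p-1} = y_{p-1}`, `b = x_p`, `b' = y_p`, `c = x_{p+1} = y_{p+1}`. -/
def Adj1 (X : PCSet) (a b b' c : X.Cell) : Prop :=
  ∃ (n k l : ℕ) (hk : k < n + 1) (hl : l < n + 2) (_ : k < l) (u : X.cube (n + 2)),
    c = ⟨n + 2, u⟩ ∧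
    b = ⟨n + 1, X.face false ⟨l, hl⟩ u⟩ ∧
    b' = ⟨n + 1, X.face false ⟨k, by omega⟩ u⟩ ∧
    a = ⟨n, X.face false ⟨k, hk⟩ (X.face false ⟨l, hl⟩ u)⟩ ∧
    a = ⟨n, X.face false ⟨l - 1, by omega⟩ (X.face false ⟨k, by omega⟩ u)⟩

/-- Adjacency condition (2): `x_p = δ_k^1 x_{p−1}`, `x_{p+1} = δ_ℓ^1 x_p`,
`y_p = δ_{ℓ−1}^1 y_{p−1}`, `y_{p+1} = δ_k^1 y_p`, `k < ℓ`. -/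
def Adj2 (X : PCSet) (a b b' c : X.Cell) : Prop :=
  ∃ (n k l : ℕ) (hk : k < n + 2) (hl : l < n + 1) (_ : k < l) (u : X.cube (n + 2)),
    a = ⟨n + 2, u⟩ ∧
    b = ⟨n + 1, X.face true ⟨k, hk⟩ u⟩ ∧
    b' = ⟨n + 1, X.face true ⟨l - 1, by omega⟩ u⟩ ∧
    c = ⟨n, X.face true ⟨l, hl⟩ (X.face true ⟨k, hk⟩ u)⟩ ∧
    c = ⟨n, X.face true ⟨k, by omega⟩ (X.face true ⟨l - 1, by omega⟩ u)⟩

/-- Adjacency condition (3): `x_p = δ_k^0 δ_ℓ^1 y_p`, `y_{p−1} = δ_k^0 y_p`,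
`y_{p+1} = δ_ℓ^1 y_p`, `k < ℓ`. -/
def Adj3 (X : PCSet) (a b b' c : X.Cell) : Prop :=
  ∃ (n k l : ℕ) (hk : k < n + 1) (hl : l < n + 2) (_ : k < l) (u : X.cube (n + 2)),
    b' = ⟨n + 2, u⟩ ∧
    b = ⟨n, X.face false ⟨k, hk⟩ (X.face true ⟨l, hl⟩ u)⟩ ∧
    a = ⟨n + 1, X.face false ⟨k, by omega⟩ u⟩ ∧
    c = ⟨n + 1, X.face true ⟨l, hl⟩ u⟩

/-- Adjacency condition (4): `x_p = δ_k^1 δ_ℓ^0 y_p`, `y_{p−1} = δ_ℓ^0 y_p`,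
`y_{p+1} = δ_k^1 y_p`, `k < ℓ`. -/
def Adj4 (X : PCSet) (a b b' c : X.Cell) : Prop :=
  ∃ (n k l : ℕ) (hk : k < n + 1) (hl : l < n + 2) (_ : k < l) (u : X.cube (n + 2)),
    b' = ⟨n + 2, u⟩ ∧
    b = ⟨n, X.face true ⟨k, hk⟩ (X.face false ⟨l, hl⟩ u)⟩ ∧
    a = ⟨n + 1, X.face false ⟨l, hl⟩ u⟩ ∧
    c = ⟨n + 1, X.face true ⟨k, by omega⟩ u⟩

/-- One of the four adjacency conditions holds, possibly with the roles of the
two paths exchanged. -/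
def AdjMid (X : PCSet) (a b b' c : X.Cell) : Prop :=
  Adj1 X a b b' c ∨ Adj2 X a b b' c ∨ Adj3 X a b b' c ∨ Adj4 X a b b' c ∨
  Adj1 X a b' b c ∨ Adj2 X a b' b c ∨ Adj3 X a b' b c ∨ Adj4 X a b' b c

/-- Two cube paths are adjacent: they agree everywhere except at exactly one
(interior) index `p`, where one of the four exchange conditions holds. -/
def Adjacent (X : PCSet) (l₁ l₂ : List X.Cell) : Prop :=
  X.IsCubePath l₁ ∧ X.IsCubePath l₂ ∧ l₁.length = l₂.length ∧
  ∃ p : ℕ, 0 < p ∧ p + 1 < l₁.length ∧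
    (∀ q : ℕ, q ≠ p → l₁[q]? = l₂[q]?) ∧
    l₁[p]? ≠ l₂[p]? ∧
    ∃ a b b' c : X.Cell,
      l₁[p - 1]? = some a ∧ l₁[p]? = some b ∧ l₂[p]? = some b' ∧
      l₁[p + 1]? = some c ∧ X.AdjMid a b b' c

/-- Homotopy of cube paths: the reflexive-transitive closure of adjacency. -/
def Homotopic (X : PCSet) : List X.Cell → List X.Cell → Prop :=
  Relation.ReflTransGen X.Adjacent

/-- Iterated application of face maps, parameters in application order. -/
inductive IterFace (X : PCSet) : X.Cell → List (ℕ × Bool) → X.Cell → Prop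
  | nil (c : X.Cell) : IterFace X c [] c
  | cons {n : ℕ} (ν : Bool) (k : Fin (n + 1)) (c : X.cube (n + 1)) {l : List (ℕ × Bool)}
      {res : X.Cell} :
      IterFace X ⟨n, X.face ν k c⟩ l res →
      IterFace X ⟨n + 1, c⟩ ((k.1, ν) :: l) res

/-- `p` is obtained from `c` as `δ_{k_1}^{ν_1}⋯δ_{k_q}^{ν_q} c` where
`k_1 < ⋯ < k_q` (in application order, the index list `ks` is strictly
decreasing). -/
def RepGen (X : PCSet) (c p : X.Cell) (ks : List ℕ) : Prop :=
  List.Pairwise (· > ·) ks ∧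
  ∃ νs : List Bool, νs.length = ks.length ∧ IterFace X c (ks.zip νs) p

/-- `l` is a representing sequence for a precubical path object. -/
def IsRep (X : PCSet) (l : List X.Cell) : Prop :=
  l ≠ [] ∧ l.Nodup ∧ l.Chain' X.Step ∧
  ∀ p : X.Cell, ∃ c ∈ l, (∃ ks, RepGen X c p ks) ∧
    ∀ ks₁ ks₂ : List ℕ, RepGen X c p ks₁ → RepGen X c p ks₂ → ks₁ = ks₂

/-- Morphisms of precubical sets. -/
structure Hom (X Y : PCSet) where
  map : ∀ n : ℕ, X.cube n → Y.cube n
  comm : ∀ (n : ℕ) (ν : Bool) (k : Fin (n + 1)) (x : X.cube (n + 1)),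
    map n (X.face ν k x) = Y.face ν k (map (n + 1) x)

def Hom.id (X : PCSet) : Hom X X where
  map _ x := x
  comm _ _ _ _ := rfl

def Hom.comp {X Y Z : PCSet} (g : Hom Y Z) (f : Hom X Y) : Hom X Z where
  map n x := g.map n (f.map n x)
  comm n ν k x := by rw [f.comm, g.comm]

def Hom.cell {X Y : PCSet} (f : Hom X Y) (x : X.Cell) : Y.Cell := ⟨x.1, f.map x.1 x.2⟩

/-- `R` is a precubical subset of the product `X × Y`. -/
def PrecubRel (X Y : PCSet) (R : Set (X.Cell × Y.Cell)) : Prop :=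
  (∀ p ∈ R, p.1.1 = p.2.1) ∧
  ∀ (n : ℕ) (x : X.cube (n + 1)) (y : Y.cube (n + 1)),
    ((⟨n + 1, x⟩, ⟨n + 1, y⟩) : X.Cell × Y.Cell) ∈ R →
    ∀ (ν : Bool) (k : Fin (n + 1)),
      ((⟨n, X.face ν k x⟩, ⟨n, Y.face ν k y⟩) : X.Cell × Y.Cell) ∈ R

/-- One-step bisimulation via a precubical relation (condition (2) of Thm 3.4). -/
def OneStepBisim (X Y : PCSet) (bx : X.Cell) (by' : Y.Cell) : Prop :=
  ∃ R : Set (X.Cell × Y.Cell), PrecubRel X Y R ∧ (bx, by') ∈ R ∧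
    ∀ (n : ℕ) (x₁ : X.cube n) (y₁ : Y.cube n),
      ((⟨n, x₁⟩, ⟨n, y₁⟩) : X.Cell × Y.Cell) ∈ R →
      (∀ (x₂ : X.cube (n + 1)) (k : Fin (n + 1)), x₁ = X.face false k x₂ →
        ∃ y₂ : Y.cube (n + 1), y₁ = Y.face false k y₂ ∧
          ((⟨n + 1, x₂⟩, ⟨n + 1, y₂⟩) : X.Cell × Y.Cell) ∈ R) ∧
      (∀ (y₂ : Y.cube (n + 1)) (k : Fin (n + 1)), y₁ = Y.face false k y₂ →
        ∃ x₂ : X.cube (n + 1), x₁ = X.face false k x₂ ∧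
          ((⟨n + 1, x₂⟩, ⟨n + 1, y₂⟩) : X.Cell × Y.Cell) ∈ R)

/-- Cube-path matching bisimulation (condition (3) of Thm 3.4). -/
def PathBisim (X Y : PCSet) (bx : X.Cell) (by' : Y.Cell) : Prop :=
  ∃ R : Set (X.Cell × Y.Cell), PrecubRel X Y R ∧ (bx, by') ∈ R ∧
    ∀ (x₁ : X.Cell) (y₁ : Y.Cell), (x₁, y₁) ∈ R →
      (∀ lx : List X.Cell, X.IsCubePath lx → lx.head? = some x₁ →
        ∃ ly : List Y.Cell, Y.IsCubePath ly ∧ ly.head? = some y₁ ∧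
          ly.length = lx.length ∧ ∀ pr ∈ lx.zip ly, pr ∈ R) ∧
      (∀ ly : List Y.Cell, Y.IsCubePath ly → ly.head? = some y₁ →
        ∃ lx : List X.Cell, X.IsCubePath lx ∧ lx.head? = some x₁ ∧
          lx.length = ly.length ∧ ∀ pr ∈ lx.zip ly, pr ∈ R)

/-- A fan-shaped cube path: one-dimensional (alternating dimensions 0 and 1)
until it has to build up to its end cube of dimension `n`. -/
def IsFan (X : PCSet) (l : List X.Cell) : Prop :=
  ∃ (n : ℕ) (c : X.cube n), l.getLast? = some ⟨n, c⟩ ∧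
    ∀ (i : ℕ) (hi : i < l.length),
      (i + n + 1 ≤ l.length → (l.get ⟨i, hi⟩).1 = if i % 2 = 0 then 0 else 1) ∧
      (l.length < i + n + 1 → (l.get ⟨i, hi⟩).1 = n + i + 1 - l.length)

/-- The cube path `(x_1, …, x_n, x)` obtained by repeatedly taking lower faces
`x_j = δ_{k_j}^0 ⋯ δ_{k_n}^0 x`, one for each choice of indices `k_j ≤ j`. -/
def lowerChain (X : PCSet) : ∀ (n : ℕ), X.cube n → (∀ j : Fin n, Fin (j.1 + 1)) → List X.Cell
  | 0, x, _ => [⟨0, x⟩]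
  | n + 1, x, ks =>
      lowerChain X n (X.face false (ks ⟨n, Nat.lt_succ_self n⟩) x)
        (fun j => ks ⟨j.1, by omega⟩) ++ [⟨n + 1, x⟩]

end PCSet

open PCSet

/-- A higher-dimensional automaton: a pointed precubical set. -/
structure HDA extends PCSet where
  base : cube 0

/-- Pointed morphisms of higher-dimensional automata. -/
structure HDAHom (X Y : HDA) where
  toHom : Hom X.toPCSet Y.toPCSet
  pointed : toHom.map 0 X.base = Y.base

def HDAHom.id (X : HDA) : HDAHom X X := ⟨Hom.id _, rfl⟩

def HDAHom.comp {X Y Z : HDA} (g : HDAHom Y Z) (f : HDAHom X Y) : HDAHom X Z :=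
  ⟨g.toHom.comp f.toHom, by
    show g.toHom.map 0 (f.toHom.map 0 X.base) = Z.base
    rw [f.pointed, g.pointed]⟩

def HDAHom.IsIso {X Y : HDA} (f : HDAHom X Y) : Prop :=
  ∃ g : HDAHom Y X, g.comp f = HDAHom.id X ∧ f.comp g = HDAHom.id Y

/-- A pointed cube path: a cube path starting in the base point. -/
def HDA.IsPointedPath (X : HDA) (l : List X.toPCSet.Cell) : Prop :=
  X.toPCSet.IsCubePath l ∧ l.head? = some ⟨0, X.base⟩

/-- A cube is reachable if some pointed cube path ends in it. -/
def HDA.Reachable (X : HDA) (x : X.toPCSet.Cell) : Prop :=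
  ∃ l, X.IsPointedPath l ∧ l.getLast? = some x

/-- The type of pointed cube paths of `X` ending in an `n`-cube. -/
def HDA.PPath (X : HDA) (n : ℕ) : Type :=
  { l : List X.toPCSet.Cell //
      X.IsPointedPath l ∧ ∃ c : X.cube n, l.getLast? = some ⟨n, c⟩ }

/-- A pointed precubical path object (object of the category HDP). -/
def HDA.IsPathObj (P : HDA) : Prop :=
  ∃ l, IsRep P.toPCSet l ∧ l.head? = some ⟨0, P.base⟩

/-- A cube path extension: maps the representation of `P` to an initial segment
of the representation of `Q`. -/
def IsExtension {P Q : HDA} (f : HDAHom P Q) : Prop :=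
  ∃ (lp : List P.toPCSet.Cell) (lq : List Q.toPCSet.Cell),
    IsRep P.toPCSet lp ∧ lp.head? = some ⟨0, P.base⟩ ∧
    IsRep Q.toPCSet lq ∧ lq.head? = some ⟨0, Q.base⟩ ∧
    ∃ hle : lp.length ≤ lq.length,
      ∀ (j : ℕ) (hj : j < lp.length),
        f.toHom.cell (lp.get ⟨j, hj⟩) = lq.get ⟨j, lt_of_lt_of_le hj hle⟩

/-- Morphisms of the category HDP: generated by pointed cube path extensions
and isomorphisms between pointed precubical path objects. -/
inductive IsHDPHom : ∀ {P Q : HDA}, HDAHom P Q → Prop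
  | ext {P Q : HDA} (f : HDAHom P Q) :
      P.IsPathObj → Q.IsPathObj → IsExtension f → IsHDPHom f
  | iso {P Q : HDA} (f : HDAHom P Q) :
      P.IsPathObj → Q.IsPathObj → f.IsIso → IsHDPHom f
  | comp {P Q R : HDA} {f : HDAHom P Q} {g : HDAHom Q R} :
      IsHDPHom f → IsHDPHom g → IsHDPHom (g.comp f)

/-- Open maps of HDA: right lifting property with respect to HDP. -/
def IsOpenHom {X Y : HDA} (f : HDAHom X Y) : Prop :=
  ∀ (P Q : HDA) (g : HDAHom P Q), IsHDPHom g →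
    ∀ (p : HDAHom P X) (q : HDAHom Q Y), f.comp p = q.comp g →
      ∃ r : HDAHom Q X, r.comp g = p ∧ f.comp r = q

/-- hd-bisimilarity: a span of open maps. -/
def HdBisimilar (X Y : HDA) : Prop :=
  ∃ (Z : HDA) (f : HDAHom Z X) (g : HDAHom Z Y), IsOpenHom f ∧ IsOpenHom g

/-- A higher-dimensional tree: every cube is the end of exactly one homotopy
class of pointed cube paths. -/
def HDA.IsTree (X : HDA) : Prop :=
  ∀ x : X.toPCSet.Cell,
    (∃ l, X.IsPointedPath l ∧ l.getLast? = some x) ∧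
    ∀ l₁ l₂ : List X.toPCSet.Cell, X.IsPointedPath l₁ → l₁.getLast? = some x →
      X.IsPointedPath l₂ → l₂.getLast? = some x → X.toPCSet.Homotopic l₁ l₂

/-- An unfolding of the HDA `X`: an HDA `Xu` whose `n`-cubes are exactly the
homotopy classes (`cls`) of pointed cube paths of `X` ending in an `n`-cube,
with the face maps, base point and projection of Definition 4.3. -/
structure Unfolding (X : HDA) where
  Xu : HDA
  proj : HDAHom Xu X
  cls : ∀ n : ℕ, X.PPath n → Xu.cube n
  cls_eq : ∀ (n : ℕ) (a b : X.PPath n),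
    cls n a = cls n b ↔ X.toPCSet.Homotopic a.1 b.1
  cls_surj : ∀ (n : ℕ) (x : Xu.cube n), ∃ a, cls n a = x
  cls_base : ∀ a : X.PPath 0, a.1 = [⟨0, X.base⟩] → cls 0 a = Xu.base
  face_true : ∀ (n : ℕ) (k : Fin (n + 1)) (a : X.PPath (n + 1)) (c : X.cube (n + 1)),
    a.1.getLast? = some ⟨n + 1, c⟩ →
    ∀ b : X.PPath n, b.1 = a.1 ++ [⟨n, X.toPCSet.face true k c⟩] →
      Xu.toPCSet.face true k (cls (n + 1) a) = cls n b
  face_false : ∀ (n : ℕ) (k : Fin (n + 1)) (a : X.PPath (n + 1)) (c : X.cube (n + 1)),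
    a.1.getLast? = some ⟨n + 1, c⟩ →
    ∀ b : X.PPath n,
      (Xu.toPCSet.face false k (cls (n + 1) a) = cls n b ↔
        b.1.getLast? = some ⟨n, X.toPCSet.face false k c⟩ ∧
          X.toPCSet.Homotopic (b.1 ++ [⟨n + 1, c⟩]) a.1)
  proj_cls : ∀ (n : ℕ) (a : X.PPath n) (c : X.cube n),
    a.1.getLast? = some ⟨n, c⟩ → proj.toHom.map n (cls n a) = c

/-- The set `δ̃_k^0 [l]` of Definition 4.3: pointed cube paths `l'` with
`l'` ending in `δ_k^0 c` and `l' * (c) ∼ l`. -/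
def predSet (X : HDA) (n : ℕ) (k : Fin (n + 1)) (c : X.cube (n + 1))
    (l : List X.toPCSet.Cell) : Set (List X.toPCSet.Cell) :=
  { l' | X.IsPointedPath l' ∧ l'.getLast? = some ⟨n, X.toPCSet.face false k c⟩ ∧
      X.toPCSet.Homotopic (l' ++ [(⟨n + 1, c⟩ : X.toPCSet.Cell)]) l }

/-- Prefix order on homotopy classes (cubes of an unfolding): some
representatives are prefix-related. -/
def Unfolding.ClassLe {X : HDA} (U : Unfolding X) (c d : U.Xu.toPCSet.Cell) : Prop :=
  ∃ (a : X.PPath c.1) (b : X.PPath d.1),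
    U.cls c.1 a = c.2 ∧ U.cls d.1 b = d.2 ∧ a.1 <+: b.1

/-- `h` is the morphism of unfoldings induced by `g` (i.e. `g̃`). -/
def IsUnfoldMap {X Y : HDA} (UX : Unfolding X) (UY : Unfolding Y)
    (g : HDAHom X Y) (h : HDAHom UX.Xu UY.Xu) : Prop :=
  ∀ (n : ℕ) (a : X.PPath n), ∃ b : Y.PPath n,
    b.1 = a.1.map g.toHom.cell ∧ h.toHom.map n (UX.cls n a) = UY.cls n b

/-- Open maps in the category HDAh: right lifting property with respect to
HDPh (morphisms of unfoldings corresponding to HDP-morphisms under the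
projections). -/
def IsOpenHDAh {X Y : HDA} (UX : Unfolding X) (UY : Unfolding Y)
    (f : HDAHom UX.Xu UY.Xu) : Prop :=
  ∀ (P Q : HDA) (UP : Unfolding P) (UQ : Unfolding Q) (g : HDAHom UP.Xu UQ.Xu),
    (∃ g₀ : HDAHom P Q, IsHDPHom g₀ ∧ UQ.proj.comp g = g₀.comp UP.proj) →
    ∀ (p : HDAHom UP.Xu UX.Xu) (q : HDAHom UQ.Xu UY.Xu),
      f.comp p = q.comp g →
      ∃ r : HDAHom UQ.Xu UX.Xu, r.comp g = p ∧ f.comp r = q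

/-- Homotopy bisimilarity: a span of open maps in HDAh. -/
def HomotopyBisimilar (X Y : HDA) : Prop :=
  ∃ (Z : HDA) (UX : Unfolding X) (UY : Unfolding Y) (UZ : Unfolding Z)
    (f : HDAHom UZ.Xu UX.Xu) (g : HDAHom UZ.Xu UY.Xu),
    IsOpenHDAh UZ UX f ∧ IsOpenHDAh UZ UY g

/-- Prefix-matching bisimulation on unfoldings (condition (4) of Prop 6.5). -/
def PrefixBisim {X Y : HDA} (UX : Unfolding X) (UY : Unfolding Y) : Prop :=
  ∃ R : Set (UX.Xu.toPCSet.Cell × UY.Xu.toPCSet.Cell),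
    PrecubRel UX.Xu.toPCSet UY.Xu.toPCSet R ∧
    ((⟨0, UX.Xu.base⟩, ⟨0, UY.Xu.base⟩) : _ × _) ∈ R ∧
    ∀ (c : UX.Xu.toPCSet.Cell) (d : UY.Xu.toPCSet.Cell), (c, d) ∈ R →
      (∀ c₂, UX.ClassLe c c₂ → ∃ d₂, UY.ClassLe d d₂ ∧ (c₂, d₂) ∈ R) ∧
      (∀ d₂, UY.ClassLe d d₂ → ∃ c₂, UX.ClassLe c c₂ ∧ (c₂, d₂) ∈ R)

/-- One refinement step of the fixed-point algorithm deciding hd-bisimilarity. -/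
def refineStep (X Y : HDA) (S : Set (X.toPCSet.Cell × Y.toPCSet.Cell)) :
    Set (X.toPCSet.Cell × Y.toPCSet.Cell) :=
  { p | p ∈ S ∧ p.1.1 = p.2.1 ∧
    (∀ (n : ℕ) (x : X.cube (n + 1)) (y : Y.cube (n + 1)),
      p = (⟨n + 1, x⟩, ⟨n + 1, y⟩) →
      ∀ (ν : Bool) (k : Fin (n + 1)),
        ((⟨n, X.toPCSet.face ν k x⟩, ⟨n, Y.toPCSet.face ν k y⟩) : _ × _) ∈ S) ∧
    (∀ (n : ℕ) (x₁ : X.cube n) (y₁ : Y.cube n),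
      p = (⟨n, x₁⟩, ⟨n, y₁⟩) →
      (∀ (x₂ : X.cube (n + 1)) (k : Fin (n + 1)), x₁ = X.toPCSet.face false k x₂ →
        ∃ y₂ : Y.cube (n + 1), y₁ = Y.toPCSet.face false k y₂ ∧
          ((⟨n + 1, x₂⟩, ⟨n + 1, y₂⟩) : _ × _) ∈ S) ∧
      (∀ (y₂ : Y.cube (n + 1)) (k : Fin (n + 1)), y₁ = Y.toPCSet.face false k y₂ →
        ∃ x₂ : X.cube (n + 1), x₁ = X.toPCSet.face false k x₂ ∧
          ((⟨n + 1, x₂⟩, ⟨n + 1, y₂⟩) : _ × _) ∈ S)) }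

/-!
A pointed cube path `(x₁, …, xₘ)` of `X` lifts to the pointed cube path
`([x₁], [x₁, x₂], …, [x₁, …, xₘ])` of `X̃`, and adjacent paths have equal or adjacent lifts, so
homotopic paths have homotopic lifts. Hence `g [x₁, …, xₘ] := [f [x₁], …, f [x₁, …, xₘ]]` is
well defined; it commutes with the face maps because those of `X̃` and `Ỹ` are computed by
extending and truncating paths, and `π_Y ∘ g = f` because `π_Y [y₁, …, yₘ] = yₘ`.

For uniqueness: every pointed cube path of `Ỹ` ends in the class of its projection to `Y`.
So if `π_Y ∘ g = f`, then `g` sends the end of any pointed cube path `p` of `X̃` to the class of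
`f ∘ p`, and every cube of `X̃` is the end of such a path.
-/

namespace PCSet

variable {Z W : PCSet}

@[refl]
theorem Homotopic.refl (l : List Z.Cell) : Z.Homotopic l l := Relation.ReflTransGen.refl

theorem Homotopic.trans {l₁ l₂ l₃ : List Z.Cell} (h₁ : Z.Homotopic l₁ l₂)
    (h₂ : Z.Homotopic l₂ l₃) : Z.Homotopic l₁ l₃ :=
  Relation.ReflTransGen.trans h₁ h₂

theorem Adjacent.homotopic {l l' : List Z.Cell} (h : Z.Adjacent l l') : Z.Homotopic l l' :=
  Relation.ReflTransGen.single h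

theorem adjacent_iff {l l' : List Z.Cell} :
    Z.Adjacent l l' ↔ Z.IsCubePath l ∧ Z.IsCubePath l' ∧
      ∃ (P S : List Z.Cell) (a b b' c : Z.Cell), P.getLast? = some a ∧ b ≠ b' ∧
        l = P ++ b :: c :: S ∧ l' = P ++ b' :: c :: S ∧ Z.AdjMid a b b' c := by
  constructor
  · rintro ⟨h, h', hlen, p, hp0, hp, hoff, hne, a, b, b', c, ha, hb, hb', hc, hmid⟩
    have hc' : l'[p + 1]? = some c := (hoff (p + 1) (by omega)).symm.trans hc
    have hsplit : ∀ {m : List Z.Cell} {x y : Z.Cell}, m[p]? = some x → m[p + 1]? = some y →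
        m = m.take p ++ x :: y :: m.drop (p + 2) := by
      intro m x y hx hy
      obtain ⟨hpm, rfl⟩ := List.getElem?_eq_some_iff.mp hx
      obtain ⟨hpm', rfl⟩ := List.getElem?_eq_some_iff.mp hy
      rw [← List.drop_eq_getElem_cons, ← List.drop_eq_getElem_cons, List.take_append_drop]
    have htake : l'.take p = l.take p := List.ext_getElem? fun q => by
      simp only [List.getElem?_take]; split_ifs with hq
      exacts [(hoff q (by omega)).symm, rfl]
    have hdrop : l'.drop (p + 2) = l.drop (p + 2) := List.ext_getElem? fun q => by
      simp only [List.getElem?_drop]; exact (hoff _ (by omega)).symm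
    refine ⟨h, h', l.take p, l.drop (p + 2), a, b, b', c, ?_, ?_, hsplit hb hc, ?_, hmid⟩
    · rw [List.getLast?_take]; simp [Nat.pos_iff_ne_zero.mp hp0, ha]
    · rintro rfl; exact hne (hb.trans hb'.symm)
    · rw [hsplit hb' hc', htake, hdrop]
  · rintro ⟨h, h', P, S, a, b, b', c, ha, hne, rfl, rfl, hmid⟩
    have hP : P ≠ [] := by rintro rfl; simp at ha
    refine ⟨h, h', by simp, P.length, List.length_pos_iff.mpr hP, by simp, fun q hq => ?_,
      by simpa using hne, a, b, b', c, ?_, by simp, by simp, by simp, hmid⟩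
    · rcases lt_or_gt_of_ne hq with hq | hq
      · simp [List.getElem?_append_left hq]
      · obtain ⟨r, rfl⟩ := Nat.exists_eq_add_of_lt hq
        rw [List.getElem?_append_right (by omega), List.getElem?_append_right (by omega),
          show P.length + r + 1 - P.length = r + 1 by omega]
        rfl
    · rw [List.getElem?_append_left (by have := List.length_pos_iff.mpr hP; omega),
        ← List.getLast?_eq_getElem?, ha]

theorem homotopic_of_adjMid {P S : List Z.Cell} {a b b' c : Z.Cell}
    (h : Z.IsCubePath (P ++ b :: c :: S)) (h' : Z.IsCubePath (P ++ b' :: c :: S))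
    (ha : P.getLast? = some a) (hmid : Z.AdjMid a b b' c) :
    Z.Homotopic (P ++ b :: c :: S) (P ++ b' :: c :: S) := by
  by_cases hb : b = b'
  · subst hb; rfl
  · exact (adjacent_iff.mpr ⟨h, h', P, S, a, b, b', c, ha, hb, rfl, rfl, hmid⟩).homotopic

theorem Adjacent.head?_eq {l l' : List Z.Cell} (h : Z.Adjacent l l') : l.head? = l'.head? := by
  obtain ⟨-, -, P, S, a, b, b', c, ha, -, rfl, rfl, -⟩ := adjacent_iff.mp h
  have hP : P ≠ [] := by rintro rfl; simp at ha
  rw [List.head?_append_of_ne_nil _ hP, List.head?_append_of_ne_nil _ hP]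

theorem Adjacent.getLast?_eq {l l' : List Z.Cell} (h : Z.Adjacent l l') :
    l.getLast? = l'.getLast? := by
  obtain ⟨-, -, P, S, a, b, b', c, -, -, rfl, rfl, -⟩ := adjacent_iff.mp h
  simp [List.getLast?_append]

theorem Homotopic.head?_eq {l l' : List Z.Cell} (h : Z.Homotopic l l') : l.head? = l'.head? := by
  induction h with
  | refl => rfl
  | tail _ hadj ih => exact ih.trans hadj.head?_eq

theorem Homotopic.getLast?_eq {l l' : List Z.Cell} (h : Z.Homotopic l l') :
    l.getLast? = l'.getLast? := by
  induction h with
  | refl => rfl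
  | tail _ hadj ih => exact ih.trans hadj.getLast?_eq

theorem Homotopic.isCubePath {l l' : List Z.Cell} (h : Z.Homotopic l l') (hl : Z.IsCubePath l) :
    Z.IsCubePath l' := by
  induction h with
  | refl => exact hl
  | tail _ hadj _ => exact hadj.2.1

theorem Step.map (f : Hom Z W) {x y : Z.Cell} (h : Z.Step x y) : W.Step (f.cell x) (f.cell y) := by
  rcases h with ⟨n, k, c, rfl, rfl⟩ | ⟨n, k, c, rfl, rfl⟩
  · exact Or.inl ⟨n, k, f.map (n + 1) c, by simp [Hom.cell, f.comm], rfl⟩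
  · exact Or.inr ⟨n, k, f.map (n + 1) c, rfl, by simp [Hom.cell, f.comm]⟩

theorem IsCubePath.map (f : Hom Z W) {l : List Z.Cell} (h : Z.IsCubePath l) :
    W.IsCubePath (l.map f.cell) :=
  ⟨by simpa using h.1, List.isChain_map_of_isChain f.cell (fun _ _ => Step.map f) h.2⟩

theorem AdjMid.imp {a b b' c : Z.Cell} {A B B' C : W.Cell}
    (h₁ : Z.Adj1 a b b' c → W.Adj1 A B B' C) (h₂ : Z.Adj2 a b b' c → W.Adj2 A B B' C)
    (h₃ : Z.Adj3 a b b' c → W.Adj3 A B B' C) (h₄ : Z.Adj4 a b b' c → W.Adj4 A B B' C)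
    (h₁' : Z.Adj1 a b' b c → W.Adj1 A B' B C) (h₂' : Z.Adj2 a b' b c → W.Adj2 A B' B C)
    (h₃' : Z.Adj3 a b' b c → W.Adj3 A B' B C) (h₄' : Z.Adj4 a b' b c → W.Adj4 A B' B C)
    (h : Z.AdjMid a b b' c) : W.AdjMid A B B' C :=
  Or.imp h₁ (Or.imp h₂ (Or.imp h₃ (Or.imp h₄
    (Or.imp h₁' (Or.imp h₂' (Or.imp h₃' h₄')))))) h

section Map

variable (f : Hom Z W) {a b b' c : Z.Cell}

theorem Adj1.map (h : Z.Adj1 a b b' c) : W.Adj1 (f.cell a) (f.cell b) (f.cell b') (f.cell c) := by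
  obtain ⟨n, k, l, hk, hl, hkl, u, rfl, rfl, rfl, rfl, ha⟩ := h
  exact ⟨n, k, l, hk, hl, hkl, f.map (n + 2) u, rfl, by simp [Hom.cell, f.comm],
    by simp [Hom.cell, f.comm], by simp [Hom.cell, f.comm],
    by simpa [Hom.cell, f.comm] using congrArg f.cell ha⟩

theorem Adj2.map (h : Z.Adj2 a b b' c) : W.Adj2 (f.cell a) (f.cell b) (f.cell b') (f.cell c) := by
  obtain ⟨n, k, l, hk, hl, hkl, u, rfl, rfl, rfl, rfl, hc⟩ := h
  exact ⟨n, k, l, hk, hl, hkl, f.map (n + 2) u, rfl, by simp [Hom.cell, f.comm],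
    by simp [Hom.cell, f.comm], by simp [Hom.cell, f.comm],
    by simpa [Hom.cell, f.comm] using congrArg f.cell hc⟩

theorem Adj3.map (h : Z.Adj3 a b b' c) : W.Adj3 (f.cell a) (f.cell b) (f.cell b') (f.cell c) := by
  obtain ⟨n, k, l, hk, hl, hkl, u, rfl, rfl, rfl, rfl⟩ := h
  exact ⟨n, k, l, hk, hl, hkl, f.map (n + 2) u, rfl, by simp [Hom.cell, f.comm],
    by simp [Hom.cell, f.comm], by simp [Hom.cell, f.comm]⟩

theorem Adj4.map (h : Z.Adj4 a b b' c) : W.Adj4 (f.cell a) (f.cell b) (f.cell b') (f.cell c) := by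
  obtain ⟨n, k, l, hk, hl, hkl, u, rfl, rfl, rfl, rfl⟩ := h
  exact ⟨n, k, l, hk, hl, hkl, f.map (n + 2) u, rfl, by simp [Hom.cell, f.comm],
    by simp [Hom.cell, f.comm], by simp [Hom.cell, f.comm]⟩

theorem AdjMid.map (h : Z.AdjMid a b b' c) :
    W.AdjMid (f.cell a) (f.cell b) (f.cell b') (f.cell c) :=
  h.imp (Adj1.map f) (Adj2.map f) (Adj3.map f) (Adj4.map f)
    (Adj1.map f) (Adj2.map f) (Adj3.map f) (Adj4.map f)

theorem Homotopic.map {l l' : List Z.Cell} (h : Z.Homotopic l l') :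
    W.Homotopic (l.map f.cell) (l'.map f.cell) := by
  induction h with
  | refl => rfl
  | tail _ hadj ih =>
    obtain ⟨h, h', P, S, a, b, b', c, ha, -, rfl, rfl, hmid⟩ := adjacent_iff.mp hadj
    refine ih.trans ?_
    simp only [List.map_append, List.map_cons] at h h' ⊢
    exact homotopic_of_adjMid (by simpa using h.map f) (by simpa using h'.map f)
      (by simp [ha]) (hmid.map f)

end Map

end PCSet

namespace HDA

variable {X Y : HDA}

theorem isPointedPath_base (X : HDA) : X.IsPointedPath [⟨0, X.base⟩] :=
  ⟨⟨by simp, List.isChain_singleton _⟩, rfl⟩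

theorem IsPointedPath.of_prefix {l₁ l₂ : List X.toPCSet.Cell} (h : X.IsPointedPath l₂)
    (hne : l₁ ≠ []) (hpre : l₁ <+: l₂) : X.IsPointedPath l₁ := by
  obtain ⟨t, rfl⟩ := hpre
  exact ⟨⟨hne, h.1.2.prefix (List.prefix_append _ _)⟩, by
    rw [← h.2, List.head?_append_of_ne_nil _ hne]⟩

theorem IsPointedPath.of_append {l₁ l₂ : List X.toPCSet.Cell}
    (h : X.IsPointedPath (l₁ ++ l₂)) (hne : l₁ ≠ []) : X.IsPointedPath l₁ :=
  h.of_prefix hne (List.prefix_append _ _)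

theorem IsPointedPath.append_singleton {l : List X.toPCSet.Cell} {e x : X.toPCSet.Cell}
    (h : X.IsPointedPath l) (he : l.getLast? = some e) (hs : X.toPCSet.Step e x) :
    X.IsPointedPath (l ++ [x]) := by
  refine ⟨⟨by simp, List.isChain_append.mpr ⟨h.1.2, List.isChain_singleton x, ?_⟩⟩, ?_⟩
  · simpa [he] using hs
  · rw [List.head?_append_of_ne_nil _ h.1.1, h.2]

theorem IsPointedPath.exists_getLast? {l : List X.toPCSet.Cell} (h : X.IsPointedPath l) :
    ∃ e, l.getLast? = some e :=
  ⟨_, List.getLast?_eq_some_getLast h.1.1⟩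

@[elab_as_elim]
theorem IsPointedPath.induction {motive : List X.toPCSet.Cell → Prop}
    (base : motive [⟨0, X.base⟩])
    (append : ∀ l e x, X.IsPointedPath l → l.getLast? = some e → X.toPCSet.Step e x →
      motive l → motive (l ++ [x]))
    {l : List X.toPCSet.Cell} (h : X.IsPointedPath l) : motive l := by
  induction l using List.reverseRecOn with
  | nil => exact absurd rfl h.1.1
  | append_singleton l x ih =>
    rcases eq_or_ne l [] with rfl | hne
    · obtain rfl : x = ⟨0, X.base⟩ := by simpa using h.2
      exact base
    · have hl := h.of_append hne
      obtain ⟨e, he⟩ := hl.exists_getLast?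
      exact append l e x hl he ((List.isChain_append.mp h.1.2).2.2 e he x rfl) (ih hl)

theorem IsPointedPath.map (f : HDAHom X Y) {l : List X.toPCSet.Cell} (h : X.IsPointedPath l) :
    Y.IsPointedPath (l.map f.toHom.cell) :=
  ⟨h.1.map f.toHom, by simp [h.2, Hom.cell, f.pointed]⟩

theorem IsPointedPath.of_homotopic {l l' : List X.toPCSet.Cell} (h : X.IsPointedPath l)
    (hh : X.toPCSet.Homotopic l l') : X.IsPointedPath l' :=
  ⟨hh.isCubePath h.1, hh.head?_eq ▸ h.2⟩

end HDA

theorem HDAHom.ext {X Y : HDA} {g h : HDAHom X Y}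
    (H : ∀ (n : ℕ) (x : X.cube n), g.toHom.map n x = h.toHom.map n x) : g = h := by
  obtain ⟨⟨gm, gc⟩, gp⟩ := g
  obtain ⟨⟨hm, hc⟩, hp⟩ := h
  obtain rfl : gm = hm := funext₂ H
  rfl

namespace Unfolding

section

variable {X : HDA} (U : Unfolding X)

open Classical in
/-- The cube `[l]` of the unfolding represented by a pointed cube path `l` (junk if `l` is
not pointed). -/
noncomputable def classOf (l : List X.toPCSet.Cell) : U.Xu.toPCSet.Cell :=
  if h : X.IsPointedPath l then
    ⟨(l.getLast h.1.1).1,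
      U.cls _ ⟨l, h, (l.getLast h.1.1).2, List.getLast?_eq_some_getLast h.1.1⟩⟩
  else ⟨0, U.Xu.base⟩

theorem classOf_eq {n : ℕ} (a : X.PPath n) : U.classOf a.1 = ⟨n, U.cls n a⟩ := by
  obtain ⟨l, h, c, hl⟩ := a
  have hlast : l.getLast h.1.1 = ⟨n, c⟩ :=
    Option.some_inj.mp ((List.getLast?_eq_some_getLast h.1.1).symm.trans hl)
  have key : ∀ {m} (b : X.PPath m), m = n → b.1 = l →
      (⟨m, U.cls m b⟩ : U.Xu.toPCSet.Cell) = ⟨n, U.cls n ⟨l, h, c, hl⟩⟩ := by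
    rintro m b rfl rfl
    rfl
  rw [classOf, dif_pos h]
  exact key _ (congrArg Sigma.fst hlast) rfl

theorem exists_classOf_eq {l : List X.toPCSet.Cell} (h : X.IsPointedPath l) {n : ℕ}
    {c : X.cube n} (hl : l.getLast? = some ⟨n, c⟩) : ∃ d, U.classOf l = ⟨n, d⟩ :=
  ⟨_, U.classOf_eq ⟨l, h, c, hl⟩⟩

theorem classOf_base : U.classOf [⟨0, X.base⟩] = ⟨0, U.Xu.base⟩ := by
  let a : X.PPath 0 := ⟨_, X.isPointedPath_base, X.base, rfl⟩
  exact (U.classOf_eq a).trans (congrArg _ (U.cls_base a rfl))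

theorem classOf_homotopic {l l' : List X.toPCSet.Cell} (h : X.IsPointedPath l)
    (hh : X.toPCSet.Homotopic l l') : U.classOf l = U.classOf l' := by
  obtain ⟨⟨n, c⟩, hl⟩ := h.exists_getLast?
  rw [U.classOf_eq ⟨l, h, c, hl⟩,
    U.classOf_eq ⟨l', h.of_homotopic hh, c, hh.getLast?_eq ▸ hl⟩]
  exact congrArg _ ((U.cls_eq n _ _).mpr hh)

theorem proj_cell_classOf {l : List X.toPCSet.Cell} (h : X.IsPointedPath l) {x : X.toPCSet.Cell}
    (hl : l.getLast? = some x) : U.proj.toHom.cell (U.classOf l) = x := by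
  obtain ⟨n, c⟩ := x
  rw [U.classOf_eq ⟨l, h, c, hl⟩]
  exact congrArg _ (U.proj_cls n _ c hl)

theorem classOf_eq_face_false {l : List X.toPCSet.Cell} {n : ℕ} {k : Fin (n + 1)}
    {c : X.cube (n + 1)} {d : U.Xu.cube (n + 1)} (h : X.IsPointedPath (l ++ [⟨n + 1, c⟩]))
    (hl : l.getLast? = some ⟨n, X.toPCSet.face false k c⟩)
    (hd : U.classOf (l ++ [⟨n + 1, c⟩]) = ⟨n + 1, d⟩) :
    U.classOf l = ⟨n, U.Xu.toPCSet.face false k d⟩ := by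
  let a : X.PPath (n + 1) := ⟨_, h, c, List.getLast?_concat⟩
  let b : X.PPath n := ⟨l, h.of_append (by rintro rfl; simp at hl), _, hl⟩
  calc U.classOf l = ⟨n, U.cls n b⟩ := U.classOf_eq b
    _ = ⟨n, U.Xu.toPCSet.face false k (U.cls (n + 1) a)⟩ :=
      congrArg _ ((U.face_false n k a c List.getLast?_concat b).mpr ⟨hl, .refl _⟩).symm
    _ = ⟨n, U.Xu.toPCSet.face false k d⟩ := by
      rw [sigma_mk_injective ((U.classOf_eq a).symm.trans hd)]

theorem classOf_append_face_true {l : List X.toPCSet.Cell} {n : ℕ} {k : Fin (n + 1)}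
    {c : X.cube (n + 1)} {d : U.Xu.cube (n + 1)} (h : X.IsPointedPath l)
    (hl : l.getLast? = some ⟨n + 1, c⟩) (hd : U.classOf l = ⟨n + 1, d⟩) :
    U.classOf (l ++ [⟨n, X.toPCSet.face true k c⟩]) = ⟨n, U.Xu.toPCSet.face true k d⟩ := by
  let a : X.PPath (n + 1) := ⟨l, h, c, hl⟩
  let b : X.PPath n :=
    ⟨_, h.append_singleton hl (Or.inr ⟨n, k, c, rfl, rfl⟩), _, List.getLast?_concat⟩
  calc U.classOf (l ++ [⟨n, X.toPCSet.face true k c⟩]) = ⟨n, U.cls n b⟩ := U.classOf_eq b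
    _ = ⟨n, U.Xu.toPCSet.face true k (U.cls (n + 1) a)⟩ :=
      congrArg _ (U.face_true n k a c hl b rfl).symm
    _ = ⟨n, U.Xu.toPCSet.face true k d⟩ := by
      rw [sigma_mk_injective ((U.classOf_eq a).symm.trans hd)]

theorem classOf_append_of_face_false {l : List X.toPCSet.Cell} {n : ℕ} {k : Fin (n + 1)}
    {x : X.cube n} {D : U.Xu.cube (n + 1)} (h : X.IsPointedPath l)
    (hl : l.getLast? = some ⟨n, x⟩) (hD : U.classOf l = ⟨n, U.Xu.toPCSet.face false k D⟩) :
    U.classOf (l ++ [⟨n + 1, U.proj.toHom.map (n + 1) D⟩]) = ⟨n + 1, D⟩ := by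
  obtain ⟨b, rfl⟩ := U.cls_surj (n + 1) D
  obtain ⟨c, hc⟩ := b.2.2
  have hb := (U.face_false n k b c hc ⟨l, h, x, hl⟩).mp
    (sigma_mk_injective ((U.classOf_eq ⟨l, h, x, hl⟩).symm.trans hD)).symm
  have hpb := h.append_singleton hb.1 (Or.inl ⟨n, k, c, rfl, rfl⟩)
  rw [U.proj_cls _ b c hc, U.classOf_homotopic hpb hb.2]
  exact U.classOf_eq b

theorem step_classOf_append {l : List X.toPCSet.Cell} {e x : X.toPCSet.Cell}
    (h : X.IsPointedPath l) (he : l.getLast? = some e) (hs : X.toPCSet.Step e x) :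
    U.Xu.toPCSet.Step (U.classOf l) (U.classOf (l ++ [x])) := by
  have h' := h.append_singleton he hs
  rcases hs with ⟨n, k, c, rfl, rfl⟩ | ⟨n, k, c, rfl, rfl⟩
  · obtain ⟨d, hd⟩ := U.exists_classOf_eq h' List.getLast?_concat
    rw [U.classOf_eq_face_false h' he hd, hd]
    exact Or.inl ⟨n, k, d, rfl, rfl⟩
  · obtain ⟨d, hd⟩ := U.exists_classOf_eq h he
    rw [U.classOf_append_face_true h he hd, hd]
    exact Or.inr ⟨n, k, d, rfl, rfl⟩

noncomputable def liftPath (l : List X.toPCSet.Cell) : List U.Xu.toPCSet.Cell :=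
  l.inits.tail.map U.classOf

theorem liftPath_append (l₁ l₂ : List X.toPCSet.Cell) :
    U.liftPath (l₁ ++ l₂) =
      U.liftPath l₁ ++ l₂.inits.tail.map (fun t => U.classOf (l₁ ++ t)) := by
  cases l₁ <;> simp [liftPath, List.inits_append, Function.comp_def]

theorem liftPath_append_singleton (l : List X.toPCSet.Cell) (x : X.toPCSet.Cell) :
    U.liftPath (l ++ [x]) = U.liftPath l ++ [U.classOf (l ++ [x])] := by
  simp [liftPath_append]

theorem liftPath_append_cons_cons (P S : List X.toPCSet.Cell) (b c : X.toPCSet.Cell) :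
    U.liftPath (P ++ b :: c :: S) = U.liftPath P ++ U.classOf (P ++ [b]) ::
      U.classOf (P ++ [b, c]) :: S.inits.tail.map (fun T => U.classOf (P ++ b :: c :: T)) := by
  rw [liftPath_append]
  cases S <;> simp [Function.comp_def]

theorem getLast?_liftPath {l : List X.toPCSet.Cell} (hne : l ≠ []) :
    (U.liftPath l).getLast? = some (U.classOf l) := by
  rw [← List.dropLast_append_getLast hne, liftPath_append_singleton]
  simp

theorem isPointedPath_liftPath {l : List X.toPCSet.Cell} (h : X.IsPointedPath l) :
    U.Xu.IsPointedPath (U.liftPath l) := by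
  refine h.induction ?_ fun l e x hl he hs ih => ?_
  · simpa [liftPath, classOf_base] using U.Xu.isPointedPath_base
  · rw [liftPath_append_singleton]
    exact ih.append_singleton (U.getLast?_liftPath hl.1.1) (U.step_classOf_append hl he hs)

section LiftAdjacency

variable {P : List X.toPCSet.Cell} {a b b' c : X.toPCSet.Cell} {C : U.Xu.toPCSet.Cell}

theorem adj1_classOf (hP : P.getLast? = some a) (h : X.IsPointedPath (P ++ [b] ++ [c]))
    (h' : X.IsPointedPath (P ++ [b'] ++ [c])) (hC : U.classOf (P ++ [b] ++ [c]) = C)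
    (hC' : U.classOf (P ++ [b'] ++ [c]) = C) (hadj : X.toPCSet.Adj1 a b b' c) :
    U.Xu.toPCSet.Adj1 (U.classOf P) (U.classOf (P ++ [b])) (U.classOf (P ++ [b'])) C := by
  obtain ⟨n, k, l, hk, hl, hkl, u, rfl, rfl, rfl, ha₁, ha₂⟩ := hadj
  obtain ⟨d, hd⟩ := U.exists_classOf_eq (c := u) h (by simp)
  subst hC
  have hB := U.classOf_eq_face_false (l := P ++ [_]) (k := ⟨l, hl⟩) (c := u)
    h (by simp) hd
  have hB' := U.classOf_eq_face_false (l := P ++ [_]) (k := ⟨k, by omega⟩) (c := u)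
    h' (by simp) (hC'.trans hd)
  exact ⟨n, k, l, hk, hl, hkl, d, hd, hB, hB',
    U.classOf_eq_face_false (h.of_append (by simp)) (by rw [hP, ha₁]) hB,
    U.classOf_eq_face_false (h'.of_append (by simp)) (by rw [hP, ha₂]) hB'⟩

theorem adj2_classOf (hP : P.getLast? = some a) (h : X.IsPointedPath (P ++ [b] ++ [c]))
    (h' : X.IsPointedPath (P ++ [b'] ++ [c])) (hC : U.classOf (P ++ [b] ++ [c]) = C)
    (hC' : U.classOf (P ++ [b'] ++ [c]) = C) (hadj : X.toPCSet.Adj2 a b b' c) :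
    U.Xu.toPCSet.Adj2 (U.classOf P) (U.classOf (P ++ [b])) (U.classOf (P ++ [b'])) C := by
  obtain ⟨n, k, l, hk, hl, hkl, u, rfl, rfl, rfl, rfl, hc⟩ := hadj
  have hPp : X.IsPointedPath P := (h.of_append (by simp)).of_append (by rintro rfl; simp at hP)
  obtain ⟨d, hd⟩ := U.exists_classOf_eq hPp hP
  have hB := U.classOf_append_face_true (k := ⟨k, hk⟩) hPp hP hd
  have hB' := U.classOf_append_face_true (k := ⟨l - 1, by omega⟩) hPp hP hd
  refine ⟨n, k, l, hk, hl, hkl, d, hd, hB, hB', ?_, ?_⟩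
  · rw [← hC]
    simpa using U.classOf_append_face_true (l := P ++ [_]) (k := ⟨l, hl⟩)
      (h.of_append (by simp)) (by simp) hB
  · rw [← hC', hc]
    simpa using U.classOf_append_face_true (l := P ++ [_]) (k := ⟨k, by omega⟩)
      (h'.of_append (by simp)) (by simp) hB'

theorem adj3_classOf (hP : P.getLast? = some a) (h : X.IsPointedPath (P ++ [b] ++ [c]))
    (h' : X.IsPointedPath (P ++ [b'] ++ [c])) (hC : U.classOf (P ++ [b] ++ [c]) = C)
    (hC' : U.classOf (P ++ [b'] ++ [c]) = C) (hadj : X.toPCSet.Adj3 a b b' c) :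
    U.Xu.toPCSet.Adj3 (U.classOf P) (U.classOf (P ++ [b])) (U.classOf (P ++ [b'])) C := by
  obtain ⟨n, k, l, hk, hl, hkl, u, rfl, rfl, rfl, rfl⟩ := hadj
  have hB'p : X.IsPointedPath (P ++ [⟨n + 2, u⟩]) := h'.of_append (by simp)
  obtain ⟨d, hd⟩ := U.exists_classOf_eq (c := u) hB'p (by simp)
  have hCd : C = ⟨n + 1, U.Xu.toPCSet.face true ⟨l, hl⟩ d⟩ := by
    rw [← hC']
    simpa using U.classOf_append_face_true (k := ⟨l, hl⟩) hB'p (by simp) hd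
  subst hCd
  exact ⟨n, k, l, hk, hl, hkl, d, hd,
    U.classOf_eq_face_false (l := P ++ [_]) (k := ⟨k, hk⟩) h (by simp) hC,
    U.classOf_eq_face_false hB'p hP hd, rfl⟩

theorem adj4_classOf (hP : P.getLast? = some a) (h' : X.IsPointedPath (P ++ [b'] ++ [c]))
    (hC' : U.classOf (P ++ [b'] ++ [c]) = C) (hadj : X.toPCSet.Adj4 a b b' c) :
    U.Xu.toPCSet.Adj4 (U.classOf P) (U.classOf (P ++ [b])) (U.classOf (P ++ [b'])) C := by
  obtain ⟨n, k, l, hk, hl, hkl, u, rfl, rfl, rfl, rfl⟩ := hadj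
  have hB'p : X.IsPointedPath (P ++ [⟨n + 2, u⟩]) := h'.of_append (by simp)
  obtain ⟨d, hd⟩ := U.exists_classOf_eq (c := u) hB'p (by simp)
  have hA := U.classOf_eq_face_false hB'p hP hd
  refine ⟨n, k, l, hk, hl, hkl, d, hd,
    U.classOf_append_face_true (hB'p.of_append (by rintro rfl; simp at hP)) hP hA, hA, ?_⟩
  rw [← hC']
  simpa using U.classOf_append_face_true (k := ⟨k, by omega⟩) hB'p (by simp) hd

theorem adjMid_classOf (hP : P.getLast? = some a) (h : X.IsPointedPath (P ++ [b, c]))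
    (h' : X.IsPointedPath (P ++ [b', c])) (hC : U.classOf (P ++ [b', c]) = U.classOf (P ++ [b, c]))
    (hadj : X.toPCSet.AdjMid a b b' c) :
    U.Xu.toPCSet.AdjMid (U.classOf P) (U.classOf (P ++ [b])) (U.classOf (P ++ [b']))
      (U.classOf (P ++ [b, c])) := by
  have e : ∀ β, P ++ [β, c] = P ++ [β] ++ [c] := fun β => by simp
  rw [e] at h h' ⊢
  rw [e, e] at hC
  exact hadj.imp (U.adj1_classOf hP h h' rfl hC) (U.adj2_classOf hP h h' rfl hC)
    (U.adj3_classOf hP h h' rfl hC) (U.adj4_classOf hP h' hC)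
    (U.adj1_classOf hP h' h hC rfl) (U.adj2_classOf hP h' h hC rfl)
    (U.adj3_classOf hP h' h hC rfl) (U.adj4_classOf hP h rfl)

end LiftAdjacency

theorem homotopic_liftPath_of_adjacent {l l' : List X.toPCSet.Cell} (h : X.IsPointedPath l)
    (hadj : X.toPCSet.Adjacent l l') : U.Xu.toPCSet.Homotopic (U.liftPath l) (U.liftPath l') := by
  have h' := h.of_homotopic hadj.homotopic
  obtain ⟨hcp, -, P, S, a, b, b', c, hP, -, rfl, rfl, hmid⟩ := adjacent_iff.mp hadj
  have hpre : ∀ T, T <+: S → U.classOf (P ++ b' :: c :: T) = U.classOf (P ++ b :: c :: T) := by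
    intro T hT
    have hpre : ∀ β, P ++ β :: c :: T <+: P ++ β :: c :: S := fun β => by simpa using hT
    exact (U.classOf_homotopic (h.of_prefix (by simp) (hpre b)) (homotopic_of_adjMid
      ⟨by simp, hcp.2.prefix (hpre b)⟩ ⟨by simp, h'.1.2.prefix (hpre b')⟩ hP hmid)).symm
  have htail : S.inits.tail.map (fun T => U.classOf (P ++ b' :: c :: T)) =
      S.inits.tail.map (fun T => U.classOf (P ++ b :: c :: T)) :=
    List.map_congr_left fun T hT => hpre T ((List.mem_inits _ _).mp (List.mem_of_mem_tail hT))
  have hl := U.isPointedPath_liftPath h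
  have hl' := U.isPointedPath_liftPath h'
  rw [liftPath_append_cons_cons] at hl hl' ⊢
  rw [liftPath_append_cons_cons, htail, hpre [] List.nil_prefix] at *
  exact homotopic_of_adjMid hl.1 hl'.1 (U.getLast?_liftPath (by rintro rfl; simp at hP))
    (U.adjMid_classOf hP (h.of_prefix (by simp) ⟨S, by simp⟩)
      (h'.of_prefix (by simp) ⟨S, by simp⟩) (hpre [] List.nil_prefix) hmid)

theorem homotopic_liftPath {l l' : List X.toPCSet.Cell} (h : X.IsPointedPath l)
    (hh : X.toPCSet.Homotopic l l') : U.Xu.toPCSet.Homotopic (U.liftPath l) (U.liftPath l') := by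
  induction hh with
  | refl => rfl
  | tail hh₁ hadj ih =>
    exact ih.trans (U.homotopic_liftPath_of_adjacent (h.of_homotopic hh₁) hadj)

theorem getLast?_eq_classOf_map_proj {m : List U.Xu.toPCSet.Cell} (h : U.Xu.IsPointedPath m) :
    m.getLast? = some (U.classOf (m.map U.proj.toHom.cell)) := by
  refine h.induction ?_ fun m e y hm he hs ih => ?_
  · simp [Hom.cell, U.proj.pointed, classOf_base]
  · have hL := hm.map U.proj
    have he' : U.classOf (m.map U.proj.toHom.cell) = e := Option.some_inj.mp (ih.symm.trans he)
    have hlast : (m.map U.proj.toHom.cell).getLast? = some (U.proj.toHom.cell e) := by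
      simp [List.getLast?_map, he]
    rw [List.map_append, List.map_singleton, List.getLast?_concat]
    rcases hs with ⟨n, k, D, rfl, rfl⟩ | ⟨n, k, D, rfl, rfl⟩
    · exact congrArg some (U.classOf_append_of_face_false hL hlast he').symm
    · refine congrArg some (Eq.symm ?_)
      simpa [Hom.cell, U.proj.toHom.comm] using U.classOf_append_face_true hL hlast he'

theorem reachable {n : ℕ} (x : U.Xu.cube n) : U.Xu.Reachable ⟨n, x⟩ := by
  obtain ⟨a, rfl⟩ := U.cls_surj n x
  exact ⟨U.liftPath a.1, U.isPointedPath_liftPath a.2.1,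
    (U.getLast?_liftPath a.2.1.1.1).trans (congrArg some (U.classOf_eq a))⟩

end

section

variable {X Y : HDA}

theorem eq_of_proj_comp_eq {W : HDA} (UY : Unfolding Y) {g g' : HDAHom W UY.Xu}
    (hW : ∀ (n : ℕ) (x : W.cube n), W.Reachable ⟨n, x⟩)
    (h : UY.proj.comp g = UY.proj.comp g') : g = g' := by
  refine HDAHom.ext fun n x => ?_
  obtain ⟨l, hl, hlast⟩ := hW n x
  have key : ∀ g : HDAHom W UY.Xu,
      some (⟨n, g.toHom.map n x⟩ : UY.Xu.toPCSet.Cell) =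
        some (UY.classOf (l.map (UY.proj.comp g).toHom.cell)) := fun g => by
    have e : l.map (UY.proj.comp g).toHom.cell = (l.map g.toHom.cell).map UY.proj.toHom.cell := by
      rw [List.map_map]; rfl
    rw [e, ← UY.getLast?_eq_classOf_map_proj (hl.map g), List.getLast?_map, hlast]
    rfl
  have hx := key g
  rw [h, ← key g'] at hx
  exact sigma_mk_injective (Option.some_inj.mp hx)

variable (UX : Unfolding X) (UY : Unfolding Y) (f : HDAHom UX.Xu Y)

theorem getLast?_map_liftPath {l : List X.toPCSet.Cell} (hne : l ≠ []) :
    ((UX.liftPath l).map f.toHom.cell).getLast? = some (f.toHom.cell (UX.classOf l)) := by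
  rw [List.getLast?_map, UX.getLast?_liftPath hne]
  rfl

noncomputable def imagePath {n : ℕ} (a : X.PPath n) : Y.PPath n :=
  ⟨(UX.liftPath a.1).map f.toHom.cell, (UX.isPointedPath_liftPath a.2.1).map f,
    f.toHom.map n (UX.cls n a), by
      rw [UX.getLast?_map_liftPath f a.2.1.1.1, UX.classOf_eq a]
      rfl⟩

noncomputable def liftMap (n : ℕ) (x : UX.Xu.cube n) : UY.Xu.cube n :=
  UY.cls n (UX.imagePath f (UX.cls_surj n x).choose)

theorem classOf_map_liftPath {l : List X.toPCSet.Cell} (h : X.IsPointedPath l) {n : ℕ}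
    {x : UX.Xu.cube n} (hx : UX.classOf l = ⟨n, x⟩) :
    UY.classOf ((UX.liftPath l).map f.toHom.cell) = ⟨n, UX.liftMap UY f n x⟩ := by
  obtain ⟨⟨m, c⟩, hl⟩ := h.exists_getLast?
  let a : X.PPath m := ⟨l, h, c, hl⟩
  obtain ⟨rfl, hx⟩ := Sigma.mk.inj_iff.mp ((UX.classOf_eq a).symm.trans hx)
  have hchoose := (UX.cls_eq m _ a).mp ((UX.cls_surj m x).choose_spec.trans (eq_of_heq hx).symm)
  have hpc := (UX.cls_surj m x).choose.2.1
  exact (UY.classOf_homotopic ((UX.isPointedPath_liftPath hpc).map f)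
    ((UX.homotopic_liftPath hpc hchoose).map f.toHom)).symm.trans
      (UY.classOf_eq (UX.imagePath f _))

theorem liftMap_face_true (n : ℕ) (k : Fin (n + 1)) (x : UX.Xu.cube (n + 1)) :
    UX.liftMap UY f n (UX.Xu.toPCSet.face true k x) =
      UY.Xu.toPCSet.face true k (UX.liftMap UY f (n + 1) x) := by
  obtain ⟨a, rfl⟩ := UX.cls_surj (n + 1) x
  obtain ⟨c, hc⟩ := a.2.2
  have ha := UX.classOf_eq a
  have hb := UX.classOf_append_face_true (k := k) a.2.1 hc ha
  have hpb := a.2.1.append_singleton hc (Or.inr ⟨n, k, c, rfl, rfl⟩)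
  have h₁ := UX.classOf_map_liftPath UY f hpb hb
  rw [liftPath_append_singleton, List.map_append, List.map_singleton, hb] at h₁
  have h₂ := UY.classOf_append_face_true (k := k) ((UX.isPointedPath_liftPath a.2.1).map f)
    (by rw [UX.getLast?_map_liftPath f a.2.1.1.1, ha]; rfl)
    (UX.classOf_map_liftPath UY f a.2.1 ha)
  simp only [Hom.cell, f.toHom.comm] at h₁
  exact sigma_mk_injective (h₁.symm.trans h₂)

theorem liftMap_face_false (n : ℕ) (k : Fin (n + 1)) (x : UX.Xu.cube (n + 1)) :
    UX.liftMap UY f n (UX.Xu.toPCSet.face false k x) =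
      UY.Xu.toPCSet.face false k (UX.liftMap UY f (n + 1) x) := by
  obtain ⟨a, rfl⟩ := UX.cls_surj (n + 1) x
  obtain ⟨c, hc⟩ := a.2.2
  obtain ⟨b, hb⟩ := UX.cls_surj n (UX.Xu.toPCSet.face false k (UX.cls (n + 1) a))
  obtain ⟨hbl, hbh⟩ := (UX.face_false n k a c hc b).mp hb.symm
  have hpb := b.2.1.append_singleton hbl (Or.inl ⟨n, k, c, rfl, rfl⟩)
  have hcls : UX.classOf (b.1 ++ [⟨n + 1, c⟩]) = ⟨n + 1, UX.cls (n + 1) a⟩ :=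
    (UX.classOf_homotopic hpb hbh).trans (UX.classOf_eq a)
  have hp := (UX.isPointedPath_liftPath hpb).map f
  have h₁ := UX.classOf_map_liftPath UY f hpb hcls
  rw [liftPath_append_singleton, List.map_append, List.map_singleton, hcls] at hp h₁
  have h₂ := UY.classOf_eq_face_false (k := k) hp
    (by rw [UX.getLast?_map_liftPath f b.2.1.1.1, UX.classOf_eq b, hb]
        simp [Hom.cell, f.toHom.comm])
    h₁
  rw [← hb]
  exact sigma_mk_injective ((UX.classOf_map_liftPath UY f b.2.1 (UX.classOf_eq b)).symm.trans h₂)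

theorem liftMap_base : UX.liftMap UY f 0 UX.Xu.base = UY.Xu.base := by
  have h := UX.classOf_map_liftPath UY f X.isPointedPath_base UX.classOf_base
  simp only [liftPath, List.inits, List.tail, List.map, UX.classOf_base, Hom.cell, f.pointed,
    UY.classOf_base] at h
  exact (sigma_mk_injective h).symm

noncomputable def lift : HDAHom UX.Xu UY.Xu where
  toHom :=
    { map := UX.liftMap UY f
      comm := fun n ν k x => by
        cases ν
        exacts [UX.liftMap_face_false UY f n k x, UX.liftMap_face_true UY f n k x] }
  pointed := UX.liftMap_base UY f

theorem proj_comp_lift : UY.proj.comp (UX.lift UY f) = f := by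
  refine HDAHom.ext fun n x => ?_
  obtain ⟨a, rfl⟩ := UX.cls_surj n x
  have h := UY.proj_cell_classOf ((UX.isPointedPath_liftPath a.2.1).map f)
    (UX.getLast?_map_liftPath f a.2.1.1.1)
  rw [UX.classOf_map_liftPath UY f a.2.1 (UX.classOf_eq a), UX.classOf_eq a] at h
  exact sigma_mk_injective h

theorem proj_comp_bijective :
    Function.Bijective (fun g : HDAHom UX.Xu UY.Xu => UY.proj.comp g) :=
  ⟨fun _ _ h => eq_of_proj_comp_eq UY (fun _ => UX.reachable) h,
    fun f => ⟨UX.lift UY f, UX.proj_comp_lift UY f⟩⟩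

end

end Unfolding

/-- Proposition 5.5: every pointed precubical morphism `f : X̃ → Y` factors
uniquely through the projection `π_Y : Ỹ → Y`; consequently (the hom-set
bijection of the adjunction) there is a coreflection between HDAh and HDA,
with counit the projections. -/
theorem hdah_coreflection :
    (∀ (X Y : HDA) (UX : Unfolding X) (UY : Unfolding Y) (f : HDAHom UX.Xu Y),
      ∃! g : HDAHom UX.Xu UY.Xu, f = UY.proj.comp g) ∧
    (∀ (X Y : HDA) (UX : Unfolding X) (UY : Unfolding Y),
      Function.Bijective (fun g : HDAHom UX.Xu UY.Xu => UY.proj.comp g)) :=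
  ⟨fun _ _ UX UY f => by simpa only [eq_comm] using (UX.proj_comp_bijective UY).existsUnique f,
    fun _ _ UX UY => UX.proj_comp_bijective UY⟩
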